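/- arXiv:2109.11792 — 2 statements merged into one kernel-verified Lean document; each statement's English description precedes it below -/
import Mathlib

section
/- Let X be a subset of a real normed vector space, let f : X → ℝ, let λ > 0, L ≥ 0, B ≥ 0, let (x_k)_{k≥0} be a sequence in X, and let (z_k)_{k≥0} be nonnegative reals with |z_k − z_0| ≤ B for all k ≥ 0. Suppose that with step sizes α_k = 1/(λ(k+2)) the fundamental inequality α_k (f(x_k) − f(x)) ≤ (1 − λ α_k) ‖x_k − x‖² − ‖x_{k+1} − x‖² + λ α_k (z_k − z_{k+1}) + α_k² L²/2 holds for every k ≥ 0 and every x ∈ X. Then for every N ≥ 0 and every x ∈ X, the telescoped bound holds: (Σ_{k=0}^{N} (f(x_k) − f(x))) + λ (N+2) ‖x_{N+1} − x‖² ≤ λ ‖x_0 − x‖² + λ B + (L²/(2λ)) · log(N+2). -/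
/-!
Dividing the `k`-th inequality by `α k = 1 / (λ (k + 2))` gives `‖x (k+1) - y‖²` the weight
`λ (k + 2)` and `‖x k - y‖²` the weight `1 / α k - λ = λ (k + 1)`, which is the weight of the
previous step, so the distance terms telescope. The `z`-terms telescope to
`λ (z 0 - z (N + 1)) ≤ λ B`, and the noise terms add up to `L² / (2λ) · ∑ 1 / (k + 2)`, which the
harmonic bound `H (N + 2) ≤ 1 + log (N + 2)` controls.
-/

open Finset

theorem sum_range_inv_add_two_le_log (n : ℕ) :
    ∑ k ∈ range n, 1 / ((k : ℝ) + 2) ≤ Real.log (n + 1) := by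
  have h := harmonic_le_one_add_log (n + 1)
  rw [harmonic, sum_range_succ'] at h
  push_cast at h
  simp only [inv_one, add_assoc, one_add_one_eq_two, one_div] at h ⊢
  linarith

theorem add_div_le_of_mul_le {a lam g d d' c M : ℝ} (ha : 0 < a)
    (h : a * g ≤ (1 - lam * a) * d - d' + lam * a * c + a ^ 2 * M / 2) :
    g + d' / a ≤ (1 / a - lam) * d + lam * c + a * M / 2 := by
  rw [← mul_le_mul_iff_of_pos_left ha]
  have ha' : a ≠ 0 := ha.ne'
  calc a * (g + d' / a) = a * g + d' := by field_simp
    _ ≤ (1 - lam * a) * d + lam * a * c + a ^ 2 * M / 2 := by linarith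
    _ = a * ((1 / a - lam) * d + lam * c + a * M / 2) := by field_simp

theorem sum_add_le_of_forall_add_le {g d w e : ℕ → ℝ}
    (h : ∀ k, g k + w (k + 1) * d (k + 1) ≤ w k * d k + e k) (n : ℕ) :
    ∑ k ∈ range n, g k + w n * d n ≤ w 0 * d 0 + ∑ k ∈ range n, e k := by
  have := sum_le_sum fun k (_ : k ∈ range n) => h k
  have tele := sum_range_sub' (fun k => w k * d k) n
  simp only [sum_add_distrib, sum_sub_distrib] at this tele ⊢
  linarith

theorem mirror_descent_telescoped_general {E : Type*} [NormedAddCommGroup E] [NormedSpace ℝ E]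
    (X : Set E) (f : E → ℝ)
    (lam L B : ℝ) (hlam : 0 < lam)
    (x : ℕ → E)
    (z : ℕ → ℝ) (hzB : ∀ k, |z k - z 0| ≤ B)
    (α : ℕ → ℝ) (hα : ∀ k, α k = 1 / (lam * ((k : ℝ) + 2)))
    (hfund : ∀ k, ∀ y ∈ X,
      α k * (f (x k) - f y) ≤
        (1 - lam * α k) * ‖x k - y‖ ^ 2 - ‖x (k + 1) - y‖ ^ 2
          + lam * α k * (z k - z (k + 1)) + α k ^ 2 * L ^ 2 / 2) :
    ∀ N : ℕ, ∀ y ∈ X,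
      (∑ k ∈ Finset.range (N + 1), (f (x k) - f y))
          + lam * ((N : ℝ) + 2) * ‖x (N + 1) - y‖ ^ 2 ≤
        lam * ‖x 0 - y‖ ^ 2 + lam * B + L ^ 2 / (2 * lam) * Real.log ((N : ℝ) + 2) := by
  intro N y hy
  have hstep (k : ℕ) :
      (f (x k) - f y) + lam * (((k + 1 : ℕ) : ℝ) + 1) * ‖x (k + 1) - y‖ ^ 2 ≤
        lam * ((k : ℝ) + 1) * ‖x k - y‖ ^ 2 +
          (lam * (z k - z (k + 1)) + L ^ 2 / (2 * lam) * (1 / ((k : ℝ) + 2))) := by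
    have hαk : 0 < α k := by rw [hα]; positivity
    have h := add_div_le_of_mul_le hαk (hfund k y hy)
    rw [hα k] at h
    convert h using 1 <;> push_cast <;> field_simp <;> ring
  have htele := sum_add_le_of_forall_add_le (w := fun k => lam * ((k : ℝ) + 1))
    (d := fun k => ‖x k - y‖ ^ 2) hstep (N + 1)
  have hz_sum : ∑ k ∈ range (N + 1), lam * (z k - z (k + 1)) = lam * (z 0 - z (N + 1)) := by
    rw [← mul_sum, sum_range_sub']
  rw [sum_add_distrib, hz_sum, ← mul_sum] at htele
  have hz : z 0 - z (N + 1) ≤ B := by linarith [(abs_le.mp (hzB (N + 1))).1]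
  have hlog : ∑ k ∈ range (N + 1), 1 / ((k : ℝ) + 2) ≤ Real.log ((N : ℝ) + 2) := by
    simpa [add_assoc, one_add_one_eq_two] using sum_range_inv_add_two_le_log (N + 1)
  have hL : 0 ≤ L ^ 2 / (2 * lam) := by positivity
  push_cast at htele
  linarith [mul_le_mul_of_nonneg_left hz hlam.le, mul_le_mul_of_nonneg_left hlog hL]

/-- Telescoped form of the mirror-descent fundamental inequality. -/
theorem mirror_descent_telescoped {E : Type*} [NormedAddCommGroup E] [NormedSpace ℝ E]
    (X : Set E) (f : E → ℝ)
    (lam L B : ℝ) (hlam : 0 < lam) (hL : 0 ≤ L) (hB : 0 ≤ B)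
    (x : ℕ → E) (hxX : ∀ k, x k ∈ X)
    (z : ℕ → ℝ) (hz : ∀ k, 0 ≤ z k) (hzB : ∀ k, |z k - z 0| ≤ B)
    (α : ℕ → ℝ) (hα : ∀ k, α k = 1 / (lam * ((k : ℝ) + 2)))
    (hfund : ∀ k, ∀ y ∈ X,
      α k * (f (x k) - f y) ≤
        (1 - lam * α k) * ‖x k - y‖ ^ 2 - ‖x (k + 1) - y‖ ^ 2
          + lam * α k * (z k - z (k + 1)) + α k ^ 2 * L ^ 2 / 2) :
    ∀ N : ℕ, ∀ y ∈ X,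
      (∑ k ∈ Finset.range (N + 1), (f (x k) - f y))
          + lam * ((N : ℝ) + 2) * ‖x (N + 1) - y‖ ^ 2 ≤
        lam * ‖x 0 - y‖ ^ 2 + lam * B + L ^ 2 / (2 * lam) * Real.log ((N : ℝ) + 2) :=
  mirror_descent_telescoped_general X f lam L B hlam x z hzB α hα hfund
end

section
/- Let X be a subset of a real normed vector space, Z a set, z_1,…,z_N ∈ Z, ℓ : X × Z → ℝ, R : X → ℝ, λ > 0, and β ≥ 0. Define L_N(x) = (1/N) Σ_{i=1}^{N} ℓ(x, z_i) + λ R(x) and, for a fixed j ∈ {1,…,N}, L_N^{\j}(x) = (1/N) Σ_{i≠j} ℓ(x, z_i) + λ R(x). Assume ℓ is β-Lipschitz in its first argument: |ℓ(x, z) − ℓ(x′, z)| ≤ β ‖x − x′‖ for all x, x′ ∈ X and z ∈ Z. Suppose x* minimizes L_N over X, x^{*\j} minimizes L_N^{\j} over X, and the quadratic growth condition λ ‖x* − x‖² ≤ L_N(x) − L_N(x*) holds for all x ∈ X. Then for every z ∈ Z, |ℓ(x*, z) − ℓ(x^{*\j}, z)| ≤ β²/(λ N); that is, regularized ERM is uniformly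 stable with stability constant β²/(λ N). -/
/-!
Removing sample `j` subtracts the `β / N`-Lipschitz term `ℓ(·, z_j) / N` from the objective.
Since `x^{*\j}` minimizes the remaining part, `L_N(x^{*\j}) - L_N(x*)` is at most
`(β / N) d` with `d = ‖x* - x^{*\j}‖`, while quadratic growth bounds it below by `λ d²`.
Hence `d ≤ β / (λ N)`, and the Lipschitz bound on `ℓ(·, z)` gives the claim.
-/

lemma le_div_of_mul_sq_le_mul {a c d : ℝ} (ha : 0 < a) (hc : 0 ≤ c) (hd : 0 ≤ d)
    (h : a * d ^ 2 ≤ c * d) : d ≤ c / a := by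
  rw [le_div_iff₀ ha]
  rcases hd.eq_or_lt with rfl | hd
  · simpa using hc
  · exact le_of_mul_le_mul_right (by linarith) hd

theorem norm_sub_le_of_quadratic_growth_of_add {E : Type*} [SeminormedAddCommGroup E]
    {F G p : E → ℝ} {lam K : ℝ} {x₀ y : E} (hlam : 0 < lam) (hK : 0 ≤ K)
    (hF : ∀ x, F x = G x + p x) (hp : p y - p x₀ ≤ K * ‖x₀ - y‖) (hy : G y ≤ G x₀)
    (hqg : lam * ‖x₀ - y‖ ^ 2 ≤ F y - F x₀) : ‖x₀ - y‖ ≤ K / lam := by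
  refine le_div_of_mul_sq_le_mul hlam hK (norm_nonneg _) ?_
  calc lam * ‖x₀ - y‖ ^ 2 ≤ F y - F x₀ := hqg
    _ = (G y - G x₀) + (p y - p x₀) := by rw [hF, hF]; ring
    _ ≤ K * ‖x₀ - y‖ := by linarith

theorem regularized_erm_uniform_stability_general {E : Type*} [NormedAddCommGroup E]
    {Z : Type*} (X : Set E) (N : ℕ) (zs : Fin N → Z)
    (ℓ : E → Z → ℝ) (R : E → ℝ) (lam β : ℝ) (hlam : 0 < lam) (hβ : 0 ≤ β)
    (j : Fin N) (LN LNj : E → ℝ)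
    (hLN : ∀ x, LN x = (1 / (N : ℝ)) * ∑ i, ℓ x (zs i) + lam * R x)
    (hLNj : ∀ x, LNj x =
      (1 / (N : ℝ)) * ∑ i ∈ Finset.univ.erase j, ℓ x (zs i) + lam * R x)
    (hlip : ∀ zz : Z, ∀ x ∈ X, ∀ x' ∈ X, |ℓ x zz - ℓ x' zz| ≤ β * ‖x - x'‖)
    (xstar : E) (hxstar : xstar ∈ X)
    (xj : E) (hxj : xj ∈ X) (hxjmin : ∀ x ∈ X, LNj xj ≤ LNj x)
    (hqg : ∀ x ∈ X, lam * ‖xstar - x‖ ^ 2 ≤ LN x - LN xstar) :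
    ∀ zz : Z, |ℓ xstar zz - ℓ xj zz| ≤ β ^ 2 / (lam * N) := by
  intro zz
  have hsplit : ∀ x, LN x = LNj x + 1 / (N : ℝ) * ℓ x (zs j) := fun x => by
    rw [hLN, hLNj, ← Finset.sum_erase_add _ _ (Finset.mem_univ j)]
    ring
  have hperturb : 1 / (N : ℝ) * ℓ xj (zs j) - 1 / (N : ℝ) * ℓ xstar (zs j) ≤
      1 / (N : ℝ) * β * ‖xstar - xj‖ := by
    rw [← mul_sub, mul_assoc, norm_sub_rev]
    gcongr
    exact le_of_abs_le (hlip (zs j) xj hxj xstar hxstar)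
  have hdist : ‖xstar - xj‖ ≤ 1 / (N : ℝ) * β / lam :=
    norm_sub_le_of_quadratic_growth_of_add hlam (by positivity) hsplit hperturb
      (hxjmin xstar hxstar) (hqg xj hxj)
  calc |ℓ xstar zz - ℓ xj zz| ≤ β * ‖xstar - xj‖ := hlip zz xstar hxstar xj hxj
    _ ≤ β * (1 / (N : ℝ) * β / lam) := by gcongr
    _ = β ^ 2 / (lam * N) := by ring

/-- Uniform stability of regularized ERM under quadratic growth: removing one sample
changes the loss on every point by at most `β² / (λ N)`. -/
theorem regularized_erm_uniform_stability {E : Type*} [NormedAddCommGroup E]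
    [NormedSpace ℝ E] {Z : Type*} (X : Set E) (N : ℕ) (hN : 1 ≤ N) (zs : Fin N → Z)
    (ℓ : E → Z → ℝ) (R : E → ℝ) (lam β : ℝ) (hlam : 0 < lam) (hβ : 0 ≤ β)
    (j : Fin N) (LN LNj : E → ℝ)
    (hLN : ∀ x, LN x = (1 / (N : ℝ)) * ∑ i, ℓ x (zs i) + lam * R x)
    (hLNj : ∀ x, LNj x =
      (1 / (N : ℝ)) * ∑ i ∈ Finset.univ.erase j, ℓ x (zs i) + lam * R x)
    (hlip : ∀ zz : Z, ∀ x ∈ X, ∀ x' ∈ X, |ℓ x zz - ℓ x' zz| ≤ β * ‖x - x'‖)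
    (xstar : E) (hxstar : xstar ∈ X) (hxstarmin : ∀ x ∈ X, LN xstar ≤ LN x)
    (xj : E) (hxj : xj ∈ X) (hxjmin : ∀ x ∈ X, LNj xj ≤ LNj x)
    (hqg : ∀ x ∈ X, lam * ‖xstar - x‖ ^ 2 ≤ LN x - LN xstar) :
    ∀ zz : Z, |ℓ xstar zz - ℓ xj zz| ≤ β ^ 2 / (lam * N) :=
  regularized_erm_uniform_stability_general X N zs ℓ R lam β hlam hβ j LN LNj hLN hLNj hlip xstar
    hxstar xj hxj hxjmin hqg
end
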